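/- With notation as in the structure theory of flag-transitive subgroups of a regular incidence complex: for -1 ≤ i < j-1 ≤ n-1, the subgroups R_i and R_j of Λ satisfy R_i · R_j = R_j · R_i as products of subsets of Λ (equivalently, R_i R_j is a subgroup). -/

import Mathlib

open scoped Pointwise

universe u

variable {α : Type u}

/-- A ranked partial order `(α, ≤)` with rank function `rk` is an incidence complex of
rank `n`: ranks run from `-1` to `n` and are strictly monotone, there are unique minimal
and maximal faces, every flag (maximal chain) contains a face of each rank `-1,…,n` (hence
has exactly `n+2` faces), the complex is strongly flag-connected, and between any two
incident faces of ranks `j-1` and `j+1` there are at least two faces of rank `j`. -/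
structure IsIncidenceComplex (n : ℕ) [PartialOrder α] (rk : α → ℤ) : Prop where
  rk_strictMono : ∀ {F G : α}, F < G → rk F < rk G
  rk_range : ∀ F : α, -1 ≤ rk F ∧ rk F ≤ n
  exists_bot : ∃ B : α, rk B = -1 ∧ ∀ F : α, B ≤ F
  exists_top : ∃ T : α, rk T = n ∧ ∀ F : α, F ≤ T
  flag_rk : ∀ Φ : Set α, IsMaxChain (· ≤ ·) Φ → ∀ j : ℤ, -1 ≤ j → j ≤ n →
    ∃ F ∈ Φ, rk F = j
  strongly_connected : ∀ Φ Ψ : Set α, IsMaxChain (· ≤ ·) Φ → IsMaxChain (· ≤ ·) Ψ →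
    Relation.ReflTransGen
      (fun A B => IsMaxChain (· ≤ ·) A ∧ IsMaxChain (· ≤ ·) B ∧ Φ ∩ Ψ ⊆ A ∧ Φ ∩ Ψ ⊆ B ∧
        ∃ F G, F ∈ A ∧ G ∈ B ∧ F ≠ G ∧ A \ {F} = B \ {G}) Φ Ψ
  diamond_ge_two : ∀ F G : α, F < G → rk G = rk F + 2 →
    ∃ H₁ H₂ : α, H₁ ≠ H₂ ∧ F < H₁ ∧ H₁ < G ∧ F < H₂ ∧ H₂ < G

/-- Two flags are `i`-adjacent when they differ in exactly one face, of rank `i`. -/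
def IAdjacent [PartialOrder α] (rk : α → ℤ) (i : ℤ) (Φ Ψ : Set α) : Prop :=
  ∃ F G, F ∈ Φ ∧ G ∈ Ψ ∧ F ≠ G ∧ rk F = i ∧ rk G = i ∧ Φ \ {F} = Ψ \ {G}

/-- The group of order automorphisms of `α`, as a subgroup of the permutations of `α`. -/
def orderAutGroup (α : Type u) [PartialOrder α] : Subgroup (Equiv.Perm α) where
  carrier := {φ | ∀ a b : α, φ a ≤ φ b ↔ a ≤ b}
  one_mem' := fun _ _ => Iff.rfl
  mul_mem' := by
    intro f g hf hg a b
    rw [Equiv.Perm.mul_apply, Equiv.Perm.mul_apply]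
    exact (hf (g a) (g b)).trans (hg a b)
  inv_mem' := by
    intro f hf a b
    conv_rhs => rw [← f.apply_symm_apply a, ← f.apply_symm_apply b]
    exact (hf _ _).symm

/-- `Λ` is a flag-transitive group of automorphisms. -/
def FlagTransitive [PartialOrder α] (Λ : Subgroup (Equiv.Perm α)) : Prop :=
  ∀ Φ Ψ : Set α, IsMaxChain (· ≤ ·) Φ → IsMaxChain (· ≤ ·) Ψ → ∃ γ ∈ Λ, γ '' Φ = Ψ

/-- The elementwise stabilizer in `Λ` of a set `Ω` of faces. -/
def stabOf [PartialOrder α] (Λ : Subgroup (Equiv.Perm α)) (Ω : Set α) :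
    Subgroup (Equiv.Perm α) where
  carrier := {γ | γ ∈ Λ ∧ ∀ x ∈ Ω, γ x = x}
  one_mem' := ⟨Λ.one_mem, fun _ _ => rfl⟩
  mul_mem' := by
    intro f g hf hg
    refine ⟨Λ.mul_mem hf.1 hg.1, fun x hx => ?_⟩
    rw [Equiv.Perm.mul_apply, hg.2 x hx, hf.2 x hx]
  inv_mem' := by
    intro f hf
    refine ⟨Λ.inv_mem hf.1, fun x hx => ?_⟩
    simpa using (congrArg (⇑f⁻¹) (hf.2 x hx)).symm

/-- The distinguished subgroup `R_i` of `Λ` relative to a base flag enumerated by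
`F : Fin n → α`: the elements of `Λ` fixing every base face `F j` with `j ≠ i`.  For
`i ∉ {0,…,n-1}` (e.g. `i = -1` or `i = n`) this is the stabilizer of the base flag. -/
def distinguishedSubgroup [PartialOrder α] {n : ℕ} (Λ : Subgroup (Equiv.Perm α))
    (F : Fin n → α) (i : ℤ) : Subgroup (Equiv.Perm α) :=
  stabOf Λ {x | ∃ j : Fin n, (j : ℤ) ≠ i ∧ x = F j}

/-!
If `γ ∈ Λ` fixes every base face except those of two ranks `a`, `b` with `|a - b| ≥ 2`, then
it fixes the faces of ranks `a ± 1`, so exchanging the rank-`a` face `x` of the base flag for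
`γ x` yields another flag. Flag-transitivity provides `τ ∈ Λ` carrying the base flag onto it;
as automorphisms preserve ranks, `τ ∈ R_a` and `τ⁻¹ γ ∈ R_b`, whence `γ ∈ R_a R_b`. Applied
to products `στ` with `σ ∈ R_i`, `τ ∈ R_j` and to `τσ`, this gives both inclusions.
-/

section

variable [PartialOrder α]

theorem mem_distinguishedSubgroup {n : ℕ} {Λ : Subgroup (Equiv.Perm α)} {F : Fin n → α}
    {c : ℤ} {γ : Equiv.Perm α} :
    γ ∈ distinguishedSubgroup Λ F c ↔ γ ∈ Λ ∧ ∀ k : Fin n, (k : ℤ) ≠ c → γ (F k) = F k := by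
  refine and_congr_right fun _ => ⟨fun hfix k hk => hfix _ ⟨k, hk, rfl⟩, ?_⟩
  rintro hfix _ ⟨k, hk, rfl⟩
  exact hfix k hk

namespace orderAutGroup

variable {φ : Equiv.Perm α}

def toOrderIso (hφ : φ ∈ orderAutGroup α) : α ≃o α := ⟨φ, hφ _ _⟩

theorem isMaxChain_image (hφ : φ ∈ orderAutGroup α) {Ψ : Set α}
    (hΨ : IsMaxChain (· ≤ ·) Ψ) : IsMaxChain (· ≤ ·) (φ '' Ψ) :=
  hΨ.image (toOrderIso hφ)

theorem image_inter_Iio (hφ : φ ∈ orderAutGroup α) (Ψ : Set α) (x : α) :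
    φ '' (Ψ ∩ Set.Iio x) = φ '' Ψ ∩ Set.Iio (φ x) := by
  rw [Set.image_inter φ.injective]
  exact congrArg (φ '' Ψ ∩ ·) ((toOrderIso hφ).image_Iio x)

end orderAutGroup

namespace IsIncidenceComplex

variable {n : ℕ} {rk : α → ℤ} {Φ : Set α} {φ : Equiv.Perm α}

theorem eq_of_isChain_of_rk_eq (h : IsIncidenceComplex n rk) {Ψ : Set α}
    (hΨ : IsChain (· ≤ ·) Ψ) {x y : α} (hx : x ∈ Ψ) (hy : y ∈ Ψ) (hxy : rk x = rk y) :
    x = y := by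
  by_contra hne
  rcases hΨ hx hy hne with hle | hle
  · exact (h.rk_strictMono (hle.lt_of_ne hne)).ne hxy
  · exact (h.rk_strictMono (hle.lt_of_ne (Ne.symm hne))).ne hxy.symm

theorem le_of_isChain_of_rk_le (h : IsIncidenceComplex n rk) {Ψ : Set α}
    (hΨ : IsChain (· ≤ ·) Ψ) {x y : α} (hx : x ∈ Ψ) (hy : y ∈ Ψ) (hxy : rk x ≤ rk y) :
    x ≤ y := by
  rcases eq_or_ne x y with rfl | hne
  · exact le_rfl
  exact (hΨ.total hx hy).resolve_right fun hyx =>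
    (h.rk_strictMono (hyx.lt_of_ne hne.symm)).not_ge hxy

theorem isMaxChain_of_forall_exists_rk_eq (h : IsIncidenceComplex n rk) {Ψ : Set α}
    (hΨ : IsChain (· ≤ ·) Ψ) (hrk : ∀ r : ℤ, -1 ≤ r → r ≤ n → ∃ w ∈ Ψ, rk w = r) :
    IsMaxChain (· ≤ ·) Ψ := by
  refine ⟨hΨ, fun Θ hΘ hsub => hsub.antisymm fun z hz => ?_⟩
  obtain ⟨w, hw, hwz⟩ := hrk (rk z) (h.rk_range z).1 (h.rk_range z).2
  rwa [h.eq_of_isChain_of_rk_eq hΘ hz (hsub hw) hwz.symm]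

theorem ncard_inter_Iio_of_isMaxChain (h : IsIncidenceComplex n rk) {Ψ : Set α}
    (hΨ : IsMaxChain (· ≤ ·) Ψ) {x : α} (hx : x ∈ Ψ) :
    (Ψ ∩ Set.Iio x).ncard = (rk x + 1).toNat := by
  have hinj : Set.InjOn rk (Ψ ∩ Set.Iio x) := fun y hy z hz =>
    h.eq_of_isChain_of_rk_eq hΨ.1 hy.1 hz.1
  have himg : rk '' (Ψ ∩ Set.Iio x) = Set.Ico (-1) (rk x) := by
    ext r
    constructor
    · rintro ⟨y, ⟨-, hyx⟩, rfl⟩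
      exact ⟨(h.rk_range y).1, h.rk_strictMono hyx⟩
    · rintro ⟨hr, hrx⟩
      obtain ⟨y, hy, rfl⟩ := h.flag_rk Ψ hΨ r hr (hrx.le.trans (h.rk_range x).2)
      refine ⟨y, ⟨hy, (h.le_of_isChain_of_rk_le hΨ.1 hy hx hrx.le).lt_of_ne ?_⟩, rfl⟩
      rintro rfl
      exact hrx.false
  rw [← hinj.ncard_image, himg, Set.ncard_eq_toFinset_card', Set.toFinset_Ico, Int.card_Ico,
    sub_neg_eq_add]

/-- Ranks are determined by the order: `rk x + 1` faces lie below `x` in any flag through `x`. -/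
theorem rk_apply (h : IsIncidenceComplex n rk) (hφ : φ ∈ orderAutGroup α) (x : α) :
    rk (φ x) = rk x := by
  obtain ⟨Ψ, hΨ, hxΨ⟩ := (IsChain.singleton (r := (· ≤ ·)) (a := x)).exists_maxChain
  have hx : x ∈ Ψ := hxΨ rfl
  have hcard := h.ncard_inter_Iio_of_isMaxChain (orderAutGroup.isMaxChain_image hφ hΨ)
    (Set.mem_image_of_mem φ hx)
  rw [← orderAutGroup.image_inter_Iio hφ, Set.ncard_image_of_injective _ φ.injective,
    h.ncard_inter_Iio_of_isMaxChain hΨ hx] at hcard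
  have := (h.rk_range x).1
  have := (h.rk_range (φ x)).1
  omega

theorem le_of_rk_eq_neg_one (h : IsIncidenceComplex n rk) {x : α} (hx : rk x = -1) (y : α) :
    x ≤ y := by
  obtain ⟨B, -, hB⟩ := h.exists_bot
  obtain rfl : B = x := (hB x).eq_of_not_lt fun hlt => by
    have := h.rk_strictMono hlt
    have := (h.rk_range B).1
    omega
  exact hB y

theorem le_of_rk_eq_rank (h : IsIncidenceComplex n rk) {x : α} (hx : rk x = n) (y : α) :
    y ≤ x := by
  obtain ⟨T, -, hT⟩ := h.exists_top
  obtain rfl : T = x := ((hT x).eq_of_not_lt fun hlt => by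
    have := h.rk_strictMono hlt
    have := (h.rk_range T).2
    omega).symm
  exact hT y

theorem apply_eq_self_of_mem_flag (h : IsIncidenceComplex n rk) (hφ : φ ∈ orderAutGroup α)
    (hΦ : IsChain (· ≤ ·) Φ) {F : Fin n → α} (hF : ∀ k : Fin n, F k ∈ Φ ∧ rk (F k) = k)
    {x : α} (hx : x ∈ Φ) (hfix : ∀ k : Fin n, (k : ℤ) = rk x → φ (F k) = F k) : φ x = x := by
  have hφx := h.rk_apply hφ x
  obtain hbot | ⟨hk₀, hkn⟩ | htop : rk x = -1 ∨ (0 ≤ rk x ∧ rk x < n) ∨ rk x = n := by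
    have := h.rk_range x
    omega
  · exact (h.le_of_rk_eq_neg_one (hφx.trans hbot) x).antisymm (h.le_of_rk_eq_neg_one hbot _)
  · let k : Fin n := ⟨(rk x).toNat, by omega⟩
    have hk : (k : ℤ) = rk x := Int.toNat_of_nonneg hk₀
    rw [← h.eq_of_isChain_of_rk_eq hΦ (hF k).1 hx ((hF k).2.trans hk)]
    exact hfix k hk
  · exact (h.le_of_rk_eq_rank htop _).antisymm (h.le_of_rk_eq_rank (hφx.trans htop) x)

theorem le_apply_of_lt (h : IsIncidenceComplex n rk) (hφ : φ ∈ orderAutGroup α)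
    (hΦ : IsMaxChain (· ≤ ·) Φ) {x : α} (hx : x ∈ Φ)
    (hfix : ∀ w ∈ Φ, rk w = rk x - 1 → φ w = w) : ∀ u ∈ Φ, u < x → u ≤ φ x := by
  intro u hu hux
  have := h.rk_strictMono hux
  have := (h.rk_range u).1
  have := (h.rk_range x).2
  obtain ⟨w, hw, hwr⟩ := h.flag_rk Φ hΦ (rk x - 1) (by omega) (by omega)
  calc u ≤ w := h.le_of_isChain_of_rk_le hΦ.1 hu hw (by omega)
    _ = φ w := (hfix w hw hwr).symm
    _ ≤ φ x := (hφ w x).2 (h.le_of_isChain_of_rk_le hΦ.1 hw hx (by omega))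

theorem apply_le_of_lt (h : IsIncidenceComplex n rk) (hφ : φ ∈ orderAutGroup α)
    (hΦ : IsMaxChain (· ≤ ·) Φ) {x : α} (hx : x ∈ Φ)
    (hfix : ∀ w ∈ Φ, rk w = rk x + 1 → φ w = w) : ∀ u ∈ Φ, x < u → φ x ≤ u := by
  intro u hu hxu
  have := h.rk_strictMono hxu
  have := (h.rk_range u).2
  have := (h.rk_range x).1
  obtain ⟨w, hw, hwr⟩ := h.flag_rk Φ hΦ (rk x + 1) (by omega) (by omega)
  calc φ x ≤ φ w := (hφ x w).2 (h.le_of_isChain_of_rk_le hΦ.1 hx hw (by omega))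
    _ = w := hfix w hw hwr
    _ ≤ u := h.le_of_isChain_of_rk_le hΦ.1 hw hu (by omega)

theorem isMaxChain_insert_diff (h : IsIncidenceComplex n rk) (hΦ : IsMaxChain (· ≤ ·) Φ)
    {x y : α} (hx : x ∈ Φ) (hy : rk y = rk x) (hlo : ∀ u ∈ Φ, u < x → u ≤ y)
    (hhi : ∀ u ∈ Φ, x < u → y ≤ u) : IsMaxChain (· ≤ ·) (insert y (Φ \ {x})) := by
  have hcomp : ∀ u ∈ Φ \ {x}, y ≠ u → y ≤ u ∨ u ≤ y := fun u ⟨hu, hux⟩ _ =>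
    (hΦ.1.total hu hx).symm.imp (fun hxu => hhi u hu (hxu.lt_of_ne' hux))
      fun hux' => hlo u hu (hux'.lt_of_ne hux)
  refine h.isMaxChain_of_forall_exists_rk_eq ((hΦ.1.mono Set.sdiff_subset).insert hcomp)
    fun r hr hrn => ?_
  by_cases hrx : r = rk x
  · exact ⟨y, Set.mem_insert _ _, hy.trans hrx.symm⟩
  · obtain ⟨w, hw, rfl⟩ := h.flag_rk Φ hΦ r hr hrn
    exact ⟨w, Or.inr ⟨hw, fun hwx => hrx (congrArg rk hwx)⟩, rfl⟩

theorem apply_eq_of_image_eq (h : IsIncidenceComplex n rk) (hφ : φ ∈ orderAutGroup α)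
    {Ψ : Set α} (hΨ : IsChain (· ≤ ·) Ψ) (himg : φ '' Φ = Ψ) {x y : α} (hx : x ∈ Φ)
    (hy : y ∈ Ψ) (hxy : rk x = rk y) : φ x = y :=
  h.eq_of_isChain_of_rk_eq hΨ (himg ▸ Set.mem_image_of_mem φ hx) hy
    ((h.rk_apply hφ x).trans hxy)

variable {Λ : Subgroup (Equiv.Perm α)} {F : Fin n → α}

theorem exists_mem_distinguishedSubgroup_apply_eq (h : IsIncidenceComplex n rk)
    (hΛ : Λ ≤ orderAutGroup α) (htrans : FlagTransitive Λ) (hΦ : IsMaxChain (· ≤ ·) Φ)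
    (hF : ∀ k : Fin n, F k ∈ Φ ∧ rk (F k) = k) {x y : α} (hx : x ∈ Φ) (hy : rk y = rk x)
    (hΨ : IsMaxChain (· ≤ ·) (insert y (Φ \ {x}))) :
    ∃ τ ∈ distinguishedSubgroup Λ F (rk x), τ x = y := by
  obtain ⟨τ, hτ, himg⟩ := htrans Φ _ hΦ hΨ
  refine ⟨τ, mem_distinguishedSubgroup.2 ⟨hτ, fun k hk => ?_⟩,
    h.apply_eq_of_image_eq (hΛ hτ) hΨ.1 himg hx (Set.mem_insert _ _) hy.symm⟩
  have hkx : F k ≠ x := fun hkx => hk (by rw [← (hF k).2, hkx])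
  exact h.apply_eq_of_image_eq (hΛ hτ) hΨ.1 himg (hF k).1 (Or.inr ⟨(hF k).1, hkx⟩) rfl

theorem mem_distinguishedSubgroup_mul (h : IsIncidenceComplex n rk)
    (hΛ : Λ ≤ orderAutGroup α) (htrans : FlagTransitive Λ) (hΦ : IsMaxChain (· ≤ ·) Φ)
    (hF : ∀ k : Fin n, F k ∈ Φ ∧ rk (F k) = k) {a b : ℤ} (ha : -1 ≤ a) (ha' : a ≤ n)
    (hab : b < a - 1 ∨ a + 1 < b) {γ : Equiv.Perm α} (hγ : γ ∈ Λ)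
    (hfix : ∀ k : Fin n, (k : ℤ) ≠ a → (k : ℤ) ≠ b → γ (F k) = F k) :
    γ ∈ (distinguishedSubgroup Λ F a : Set (Equiv.Perm α)) * distinguishedSubgroup Λ F b := by
  have hfixΦ : ∀ w ∈ Φ, rk w ≠ a → rk w ≠ b → γ w = w := fun w hw hwa hwb =>
    h.apply_eq_self_of_mem_flag (hΛ hγ) hΦ.1 hF hw fun k hk => hfix k (hk ▸ hwa) (hk ▸ hwb)
  obtain ⟨x, hx, rfl⟩ := h.flag_rk Φ hΦ a ha ha'
  have hγx := h.rk_apply (hΛ hγ) x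
  have hΨ := h.isMaxChain_insert_diff hΦ hx hγx
    (h.le_apply_of_lt (hΛ hγ) hΦ hx fun w hw hwr => hfixΦ w hw (by omega) (by omega))
    (h.apply_le_of_lt (hΛ hγ) hΦ hx fun w hw hwr => hfixΦ w hw (by omega) (by omega))
  obtain ⟨τ, hτ, hτx⟩ :=
    h.exists_mem_distinguishedSubgroup_apply_eq hΛ htrans hΦ hF hx hγx hΨ
  refine Set.mem_mul.2 ⟨τ, hτ, τ⁻¹ * γ, ?_, mul_inv_cancel_left τ γ⟩
  rw [SetLike.mem_coe, mem_distinguishedSubgroup]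
  rw [mem_distinguishedSubgroup] at hτ
  refine ⟨Λ.mul_mem (Λ.inv_mem hτ.1) hγ, fun k hkb => ?_⟩
  rw [Equiv.Perm.mul_apply, Equiv.Perm.inv_eq_iff_eq]
  by_cases hka : (k : ℤ) = rk x
  · rw [h.eq_of_isChain_of_rk_eq hΦ.1 (hF k).1 hx ((hF k).2.trans hka), hτx]
  · rw [hfix k hka hkb, hτ.2 k hka]

theorem distinguishedSubgroup_mul_subset (h : IsIncidenceComplex n rk)
    (hΛ : Λ ≤ orderAutGroup α) (htrans : FlagTransitive Λ) (hΦ : IsMaxChain (· ≤ ·) Φ)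
    (hF : ∀ k : Fin n, F k ∈ Φ ∧ rk (F k) = k) {a b : ℤ} (ha : -1 ≤ a) (ha' : a ≤ n)
    (hab : b < a - 1 ∨ a + 1 < b) :
    (distinguishedSubgroup Λ F b : Set (Equiv.Perm α)) * distinguishedSubgroup Λ F a ⊆
      (distinguishedSubgroup Λ F a : Set (Equiv.Perm α)) * distinguishedSubgroup Λ F b := by
  rintro _ ⟨σ, hσ, τ, hτ, rfl⟩
  rw [SetLike.mem_coe, mem_distinguishedSubgroup] at hσ hτ
  refine h.mem_distinguishedSubgroup_mul hΛ htrans hΦ hF ha ha' hab (Λ.mul_mem hσ.1 hτ.1)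
    fun k hka hkb => ?_
  rw [Equiv.Perm.mul_apply, hτ.2 k hka, hσ.2 k hkb]

end IsIncidenceComplex

end

/-- For `-1 ≤ i < j - 1 ≤ n - 1`, the distinguished subgroups `R i` and
`R j` of a flag-transitive group `Λ` of automorphisms of a regular incidence complex
satisfy `R i · R j = R j · R i` as products of subsets of `Λ`. -/
theorem distinguished_subgroups_products_commute
    {α : Type u} [PartialOrder α] {n : ℕ} (rk : α → ℤ)
    (h : IsIncidenceComplex n rk)
    (Λ : Subgroup (Equiv.Perm α)) (hΛ : Λ ≤ orderAutGroup α)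
    (htrans : FlagTransitive Λ)
    (Φ : Set α) (hΦ : IsMaxChain (· ≤ ·) Φ)
    (F : Fin n → α) (hF : ∀ i : Fin n, F i ∈ Φ ∧ rk (F i) = (i : ℤ))
    (i j : ℤ) (hi : -1 ≤ i) (hij : i < j - 1) (hj : j - 1 ≤ n - 1) :
    (distinguishedSubgroup Λ F i : Set (Equiv.Perm α))
          * (distinguishedSubgroup Λ F j : Set (Equiv.Perm α))
      = (distinguishedSubgroup Λ F j : Set (Equiv.Perm α))
          * (distinguishedSubgroup Λ F i : Set (Equiv.Perm α)) :=
  (h.distinguishedSubgroup_mul_subset hΛ htrans hΦ hF (by omega) (by omega) (.inl hij)).antisymm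
    (h.distinguishedSubgroup_mul_subset hΛ htrans hΦ hF hi (by omega) (.inr (by omega)))
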